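/- arXiv:alg-geom/9602016 — 5 statements merged into one kernel-verified Lean document; each statement's English description precedes it below -/
import Mathlib

section
/- Let F be an irreducible quartic form in ℂ[x,y,z] and suppose F = UW - V² = UW' - V'² with U irreducible quadratic. Then there exists λ ∈ ℂ and a sign ε ∈ {±1} with V' = ε(λU - V) and W' = λ²U - 2λV + W; in particular (U,V,W) and (U,V',W') define the same one-parameter family of touching conics. -/
/-!
Since `U * W - V ^ 2 = U * W' - V' ^ 2`, the prime `U` divides `V' ^ 2 - V ^ 2 = (V' - V) * (V' + V)`,
hence one of `V' ∓ V`. A multiple of a nonzero quadratic form which is itself a quadratic form is a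
scalar multiple of it, so `V' = ε (λ U - V)` with `ε = ±1`; cancelling `U` in
`U * W' = U * W - V ^ 2 + V' ^ 2` then gives `W'`.
-/

open MvPolynomial

theorem MvPolynomial.IsHomogeneous.exists_eq_C_mul_of_dvd {σ R : Type*} [CommRing R] [IsDomain R]
    {n : ℕ} {U P : MvPolynomial σ R} (hU : U.IsHomogeneous n) (hU0 : U ≠ 0)
    (hP : P.IsHomogeneous n) (hUP : U ∣ P) : ∃ c, P = C c * U := by
  obtain ⟨Q, rfl⟩ := hUP
  rcases eq_or_ne Q 0 with rfl | hQ0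
  · exact ⟨0, by simp⟩
  have hQdeg : Q.totalDegree = 0 := by
    have := hP.totalDegree (mul_ne_zero hU0 hQ0)
    rw [totalDegree_mul_of_isDomain hU0 hQ0, hU.totalDegree hU0] at this
    omega
  exact ⟨coeff 0 Q, by rw [mul_comm, ← totalDegree_eq_zero_iff_eq_C.mp hQdeg]⟩

theorem Prime.dvd_sub_or_dvd_add_of_mul_sub_sq_eq {R : Type*} [CommRing R] {U V W V' W' : R}
    (hU : Prime U) (h : U * W - V ^ 2 = U * W' - V' ^ 2) : U ∣ V' - V ∨ U ∣ V' + V :=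
  hU.dvd_or_dvd ⟨W' - W, by linear_combination h⟩

theorem eq_of_mul_sub_sq_eq_of_sq_eq {R : Type*} [CommRing R] [IsDomain R] {U V W V' W' lam : R}
    (hU : U ≠ 0) (h : U * W - V ^ 2 = U * W' - V' ^ 2) (hV' : V' ^ 2 = (lam * U - V) ^ 2) :
    W' = lam ^ 2 * U - 2 * lam * V + W :=
  mul_left_cancel₀ hU (by linear_combination hV' - h)

theorem same_conic_same_family_general
    (F U V W V' W' : MvPolynomial (Fin 3) ℂ)
    (hU : U.IsHomogeneous 2) (hV : V.IsHomogeneous 2)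
    (hV' : V'.IsHomogeneous 2)
    (hUirr : Irreducible U)
    (h1 : F = U * W - V ^ 2) (h2 : F = U * W' - V' ^ 2) :
    ∃ (lam eps : ℂ), (eps = 1 ∨ eps = -1) ∧
      V' = C eps * (C lam * U - V) ∧
      W' = (C lam) ^ 2 * U - 2 * C lam * V + W := by
  have hF : U * W - V ^ 2 = U * W' - V' ^ 2 := h1.symm.trans h2
  obtain ⟨eps, heps, hdvd⟩ : ∃ eps : ℂ, (eps = 1 ∨ eps = -1) ∧ U ∣ V' + C eps * V := by
    rcases hUirr.prime.dvd_sub_or_dvd_add_of_mul_sub_sq_eq hF with h | h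
    · exact ⟨-1, Or.inr rfl, by simpa [sub_eq_add_neg] using h⟩
    · exact ⟨1, Or.inl rfl, by simpa using h⟩
  obtain ⟨c, hc⟩ := hU.exists_eq_C_mul_of_dvd hUirr.ne_zero (hV'.add (hV.C_mul eps)) hdvd
  have heps_sq : C eps ^ 2 = (1 : MvPolynomial (Fin 3) ℂ) := by
    rcases heps with rfl | rfl <;> simp
  have hV'_eq : V' = C eps * (C (eps * c) * U - V) := by
    rw [map_mul]
    linear_combination hc - C c * U * heps_sq
  refine ⟨eps * c, eps, heps, hV'_eq, eq_of_mul_sub_sq_eq_of_sq_eq hUirr.ne_zero hF ?_⟩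
  rw [hV'_eq]
  linear_combination (C (eps * c) * U - V) ^ 2 * heps_sq

/-- If an irreducible quartic `F` admits two presentations
`F = UW - V² = UW' - V'²` with the same irreducible quadratic `U`, then
`V' = ε(λU - V)` and `W' = λ²U - 2λV + W` for some `λ ∈ ℂ` and sign `ε ∈ {±1}`;
in particular `(U,V,W)` and `(U,V',W')` define the same one-parameter family. -/
theorem same_conic_same_family
    (F U V W V' W' : MvPolynomial (Fin 3) ℂ)
    (hF4 : F.IsHomogeneous 4) (hFirr : Irreducible F)
    (hU : U.IsHomogeneous 2) (hV : V.IsHomogeneous 2) (hW : W.IsHomogeneous 2)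
    (hV' : V'.IsHomogeneous 2) (hW' : W'.IsHomogeneous 2)
    (hUirr : Irreducible U)
    (h1 : F = U * W - V ^ 2) (h2 : F = U * W' - V' ^ 2) :
    ∃ (lam eps : ℂ), (eps = 1 ∨ eps = -1) ∧
      V' = C eps * (C lam * U - V) ∧
      W' = (C lam) ^ 2 * U - 2 * C lam * V + W :=
  same_conic_same_family_general F U V W V' W' hU hV hV' hUirr h1 h2
end

section
/- If F = L²W - V² with L a linear form and V, W quadratic forms in ℂ[x,y,z], and the quartic curve F = 0 is irreducible, then the curve F = 0 has at least two singular points or a cusp; in particular, an irreducible quartic with at most one ordinary node cannot be written as L²W - V². -/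
/-!
Irreducibility of `F` forces `L ≠ 0`, and every point where `L` and `V` both vanish is singular
on `F = L²W - V²`. The line `L = 0` meets the conic `V = 0` in some point `p`; pick `q` on the
line independent of `p`. If the polar value `B = ∑ qᵢ ∂ᵢV(p)` is nonzero, the expansion
`V(q + t p) = V(q) + t B` gives a second intersection point `q - (V(q)/B) p`. If `B = 0`, the
line is tangent to the conic at `p`: there the Hessian of `F` is
`2W(p) ∇L ∇Lᵀ - 2 ∇V(p) ∇V(p)ᵀ`, which kills both `p` (Euler: `p ⬝ ∇V(p) = 2V(p) = 0`) and `q`,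
so it has rank at most one.
-/

open MvPolynomial Matrix Module

/-- A point `p ≠ 0` of `ℙ²` (given by homogeneous coordinates) is a singular point of the
plane curve `F = 0` if `F` and all its partial derivatives vanish at `p`. -/
def IsSingularPointOf (F : MvPolynomial (Fin 3) ℂ) (p : Fin 3 → ℂ) : Prop :=
  eval p F = 0 ∧ ∀ i : Fin 3, eval p (pderiv i F) = 0

/-- The Hessian matrix of second partial derivatives of `F` evaluated at `p`. -/
noncomputable def hessianAt (F : MvPolynomial (Fin 3) ℂ) (p : Fin 3 → ℂ) : Matrix (Fin 3) (Fin 3) ℂ :=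
  Matrix.of fun i j => eval p (pderiv i (pderiv j F))

theorem Submodule.exists_mem_forall_ne_smul {K V : Type*} [Field K] [AddCommGroup V] [Module K V]
    {S : Submodule K V} (hS : 2 ≤ finrank K S) (p : V) : ∃ q ∈ S, ∀ c : K, q ≠ c • p := by
  by_contra! h
  have hle : S ≤ K ∙ p := fun q hq ↦ by
    obtain ⟨c, rfl⟩ := h q hq
    exact Submodule.smul_mem _ c (Submodule.mem_span_singleton_self p)
  have := (Submodule.finrank_mono hle).trans (finrank_span_le_card ({p} : Set V))
  simp only [Set.toFinset_singleton, Finset.card_singleton] at this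
  omega

theorem Matrix.rank_add_card_le_of_mulVec_eq_zero {K m n ι : Type*} [Field K] [Fintype n]
    [Fintype ι] (A : Matrix m n K) {v : ι → n → K} (hv : LinearIndependent K v)
    (hAv : ∀ i, A *ᵥ v i = 0) : A.rank + Fintype.card ι ≤ Fintype.card n := by
  have hker : Submodule.span K (Set.range v) ≤ LinearMap.ker A.mulVecLin :=
    Submodule.span_le.mpr (by rintro _ ⟨i, rfl⟩; exact hAv i)
  have hrank := A.mulVecLin.finrank_range_add_finrank_ker
  have hspan := Submodule.finrank_mono hker
  rw [finrank_fintype_fun_eq_card] at hrank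
  rw [finrank_span_eq_card hv] at hspan
  unfold Matrix.rank
  omega

namespace MvPolynomial

variable {R : Type*} [CommSemiring R] {σ : Type*}

theorem pderiv_pderiv_comm (i j : σ) (p : MvPolynomial σ R) :
    pderiv i (pderiv j p) = pderiv j (pderiv i p) := by
  classical
  induction p using MvPolynomial.induction_on with
  | C a => simp
  | add p q hp hq => simp [hp, hq]
  | mul_X p k hp =>
    simp only [pderiv_mul, map_add, hp, pderiv_X, Pi.single_apply, apply_ite (pderiv _),
      pderiv_one, map_zero, ite_self, mul_zero, add_zero]
    ring

theorem IsHomogeneous.eval_eq_of_degree_zero {p : MvPolynomial σ R} (hp : p.IsHomogeneous 0)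
    (x y : σ → R) : eval x p = eval y p := by
  rw [← totalDegree_zero_iff_isHomogeneous, totalDegree_eq_zero_iff_eq_C] at hp
  rw [hp, eval_C, eval_C]

noncomputable def gradAt (p : MvPolynomial σ R) (x : σ → R) : σ → R :=
  fun i ↦ eval x (pderiv i p)

theorem IsHomogeneous.gradAt_eq_of_degree_one {p : MvPolynomial σ R} (hp : p.IsHomogeneous 1)
    (x y : σ → R) : gradAt p x = gradAt p y := by
  ext i
  exact IsHomogeneous.eval_eq_of_degree_zero hp.pderiv x y

variable [Fintype σ]

theorem IsHomogeneous.dotProduct_gradAt {p : MvPolynomial σ R} {n : ℕ} (hp : p.IsHomogeneous n)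
    (x : σ → R) : x ⬝ᵥ gradAt p x = n * eval x p := by
  simpa [dotProduct, gradAt, nsmul_eq_mul] using congrArg (eval x) hp.sum_X_mul_pderiv

theorem IsHomogeneous.eval_eq_dotProduct {p : MvPolynomial σ R} (hp : p.IsHomogeneous 1)
    (x y : σ → R) : eval x p = x ⬝ᵥ gradAt p y := by
  rw [← hp.gradAt_eq_of_degree_one x y, hp.dotProduct_gradAt, Nat.cast_one, one_mul]

theorem IsHomogeneous.gradAt_add_smul {p : MvPolynomial σ R} (hp : p.IsHomogeneous 2)
    (x y : σ → R) (t : R) : gradAt p (x + t • y) = gradAt p x + t • gradAt p y := by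
  ext i
  have hpi : (pderiv i p).IsHomogeneous 1 := hp.pderiv
  simp only [Pi.add_apply, Pi.smul_apply, smul_eq_mul, gradAt]
  rw [hpi.eval_eq_dotProduct _ 0, hpi.eval_eq_dotProduct x 0, hpi.eval_eq_dotProduct y 0,
    add_dotProduct, smul_dotProduct, smul_eq_mul]

theorem IsHomogeneous.dotProduct_gradAt_comm {p : MvPolynomial σ R} (hp : p.IsHomogeneous 2)
    (x y : σ → R) : x ⬝ᵥ gradAt p y = y ⬝ᵥ gradAt p x := by
  have h (x y : σ → R) :
      x ⬝ᵥ gradAt p y = ∑ i, ∑ j, x i * y j * eval 0 (pderiv j (pderiv i p)) := by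
    simp only [dotProduct, gradAt]
    refine Finset.sum_congr rfl fun i _ ↦ ?_
    rw [(hp.pderiv (i := i) : (pderiv i p).IsHomogeneous 1).eval_eq_dotProduct y 0, dotProduct,
      Finset.mul_sum]
    simp only [gradAt, mul_assoc]
  rw [h, h, Finset.sum_comm]
  simp only [pderiv_pderiv_comm, mul_comm (x _)]

theorem IsHomogeneous.eval_add_smul {K : Type*} [Field K] [CharZero K] {p : MvPolynomial σ K}
    (hp : p.IsHomogeneous 2) (x y : σ → K) (t : K) :
    eval (x + t • y) p = eval x p + t * (y ⬝ᵥ gradAt p x) + t ^ 2 * eval y p := by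
  refine mul_left_cancel₀ (two_ne_zero (α := K)) ?_
  have h := hp.dotProduct_gradAt
  push_cast at h
  rw [← h, hp.gradAt_add_smul]
  simp only [add_dotProduct, dotProduct_add, smul_dotProduct, dotProduct_smul, smul_eq_mul]
  linear_combination h x + t ^ 2 * h y + t * hp.dotProduct_gradAt_comm x y

theorem IsHomogeneous.eval_sub_div_smul_eq_zero {K : Type*} [Field K] [CharZero K]
    {V : MvPolynomial σ K} (hV : V.IsHomogeneous 2) {p q : σ → K} (hp : eval p V = 0)
    (hB : q ⬝ᵥ gradAt V p ≠ 0) :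
    eval (q - (eval q V / (q ⬝ᵥ gradAt V p)) • p) V = 0 := by
  rw [sub_eq_add_neg, ← neg_smul, hV.eval_add_smul, hp, hV.dotProduct_gradAt_comm p q]
  field_simp
  ring

theorem IsHomogeneous.exists_mem_ne_zero_eval_eq_zero {K : Type*} [Field K] [IsAlgClosed K]
    [CharZero K] {V : MvPolynomial σ K} (hV : V.IsHomogeneous 2) {S : Submodule K (σ → K)}
    (hS : 2 ≤ finrank K S) : ∃ p ∈ S, p ≠ 0 ∧ eval p V = 0 := by
  obtain ⟨a, haS, ha0⟩ := Submodule.exists_mem_ne_zero_of_ne_bot (p := S) (by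
    rintro rfl
    simp at hS)
  by_cases hVa : eval a V = 0
  · exact ⟨a, haS, ha0, hVa⟩
  obtain ⟨q, hqS, hqa⟩ := Submodule.exists_mem_forall_ne_smul hS a
  obtain ⟨t, ht⟩ := exists_quadratic_eq_zero (b := a ⬝ᵥ gradAt V q) (c := eval q V) hVa
    (IsAlgClosed.exists_eq_mul_self _)
  refine ⟨q + t • a, S.add_mem hqS (S.smul_mem t haS), fun h ↦ hqa (-t) ?_, ?_⟩
  · rw [neg_smul, eq_neg_iff_add_eq_zero, h]
  · rw [hV.eval_add_smul]
    linear_combination ht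

theorem IsHomogeneous.exists_hyperplane_eval_eq_zero {K : Type*} [Field K] [Infinite K]
    {L : MvPolynomial σ K} (hL : L.IsHomogeneous 1) (hL0 : L ≠ 0) :
    ∃ S : Submodule K (σ → K),
      finrank K S + 1 = Fintype.card σ ∧ ∀ x ∈ S, eval x L = 0 := by
  classical
  have hf : dotProductEquiv K σ (gradAt L 0) ≠ 0 := by
    rw [LinearEquiv.map_ne_zero_iff]
    intro h
    exact hL0 (MvPolynomial.funext fun x ↦ by simp [hL.eval_eq_dotProduct x 0, h])
  refine ⟨LinearMap.ker (dotProductEquiv K σ (gradAt L 0)), ?_, fun x hx ↦ ?_⟩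
  · rw [Module.Dual.finrank_ker_add_one_of_ne_zero hf, finrank_fintype_fun_eq_card]
  · rw [hL.eval_eq_dotProduct x 0, dotProduct_comm]
    simpa using hx

end MvPolynomial

theorem ne_zero_of_irreducible_sq_mul_sub_sq {R : Type*} [CommRing R] {L V W : R}
    (h : Irreducible (L ^ 2 * W - V ^ 2)) : L ≠ 0 := by
  rintro rfl
  have hFV : (0 : R) ^ 2 * W - V ^ 2 = -V * V := by ring
  have hV : IsUnit V := (h.isUnit_or_isUnit hFV).elim (IsUnit.neg_iff V).mp id
  exact h.not_isUnit (hFV ▸ hV.neg.mul hV)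

section SqMulSubSq

variable {L V W : MvPolynomial (Fin 3) ℂ} {p : Fin 3 → ℂ}

theorem isSingularPointOf_sq_mul_sub_sq (hLp : eval p L = 0) (hVp : eval p V = 0) :
    IsSingularPointOf (L ^ 2 * W - V ^ 2) p :=
  ⟨by simp [hLp, hVp], fun i ↦ by simp [hLp, hVp]⟩

theorem hessianAt_sq_mul_sub_sq (hLp : eval p L = 0) (hVp : eval p V = 0) :
    hessianAt (L ^ 2 * W - V ^ 2) p =
      (2 * eval p W) • vecMulVec (gradAt L p) (gradAt L p) -
        (2 : ℂ) • vecMulVec (gradAt V p) (gradAt V p) := by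
  ext i j
  simp only [hessianAt, gradAt, of_apply, Matrix.sub_apply, Matrix.smul_apply, vecMulVec_apply,
    smul_eq_mul, pderiv_mul, pderiv_pow, map_sub, map_add, map_mul, map_pow, map_natCast,
    hLp, hVp]
  ring

theorem hessianAt_sq_mul_sub_sq_mulVec_eq_zero (hL : L.IsHomogeneous 1) (hLp : eval p L = 0)
    (hVp : eval p V = 0) {k : Fin 3 → ℂ} (hLk : eval k L = 0) (hVk : k ⬝ᵥ gradAt V p = 0) :
    hessianAt (L ^ 2 * W - V ^ 2) p *ᵥ k = 0 := by
  rw [hL.eval_eq_dotProduct k p] at hLk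
  rw [hessianAt_sq_mul_sub_sq hLp hVp, sub_mulVec, smul_mulVec, smul_mulVec, vecMulVec_mulVec,
    vecMulVec_mulVec, dotProduct_comm _ k, dotProduct_comm _ k, hLk, hVk]
  simp

theorem rank_hessianAt_sq_mul_sub_sq_le_one (hL : L.IsHomogeneous 1) (hV : V.IsHomogeneous 2)
    (hLp : eval p L = 0) (hVp : eval p V = 0) {q : Fin 3 → ℂ} (hLq : eval q L = 0)
    (hVq : q ⬝ᵥ gradAt V p = 0) (hpq : LinearIndependent ℂ ![p, q]) :
    (hessianAt (L ^ 2 * W - V ^ 2) p).rank ≤ 1 := by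
  have hVp' : p ⬝ᵥ gradAt V p = 0 := by simp [hV.dotProduct_gradAt, hVp]
  have h := (hessianAt (L ^ 2 * W - V ^ 2) p).rank_add_card_le_of_mulVec_eq_zero hpq <|
    Fin.forall_fin_two.mpr
      ⟨hessianAt_sq_mul_sub_sq_mulVec_eq_zero hL hLp hVp hLp hVp',
        hessianAt_sq_mul_sub_sq_mulVec_eq_zero hL hLp hVp hLq hVq⟩
  simp only [Fintype.card_fin] at h
  omega

end SqMulSubSq

theorem square_factor_forces_bad_singularities_general
    (L V W F : MvPolynomial (Fin 3) ℂ)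
    (hL : L.IsHomogeneous 1) (hV : V.IsHomogeneous 2)
    (hF : F = L ^ 2 * W - V ^ 2) (hFirr : Irreducible F) :
    (∃ p q : Fin 3 → ℂ, p ≠ 0 ∧ q ≠ 0 ∧ (∀ c : ℂ, q ≠ c • p) ∧
        IsSingularPointOf F p ∧ IsSingularPointOf F q) ∨
    (∃ p : Fin 3 → ℂ, p ≠ 0 ∧ IsSingularPointOf F p ∧ (hessianAt F p).rank ≤ 1) := by
  subst hF
  obtain ⟨S, hS, hLS⟩ :=
    hL.exists_hyperplane_eval_eq_zero (ne_zero_of_irreducible_sq_mul_sub_sq hFirr)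
  replace hS : 2 ≤ finrank ℂ S := by rw [Fintype.card_fin] at hS; omega
  obtain ⟨p, hpS, hp0, hVp⟩ := hV.exists_mem_ne_zero_eval_eq_zero hS
  obtain ⟨q, hqS, hqp⟩ := Submodule.exists_mem_forall_ne_smul hS p
  by_cases hB : q ⬝ᵥ gradAt V p = 0
  · have hpq : LinearIndependent ℂ ![p, q] :=
      (LinearIndependent.pair_iff' hp0).mpr fun c h ↦ hqp c h.symm
    exact .inr ⟨p, hp0, isSingularPointOf_sq_mul_sub_sq (hLS p hpS) hVp,
      rank_hessianAt_sq_mul_sub_sq_le_one hL hV (hLS p hpS) hVp (hLS q hqS) hB hpq⟩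
  · set t := eval q V / (q ⬝ᵥ gradAt V p)
    have hq'S : q - t • p ∈ S := S.sub_mem hqS (S.smul_mem t hpS)
    refine .inl ⟨p, q - t • p, hp0, fun h ↦ hqp t (sub_eq_zero.mp h),
      fun c h ↦ hqp (c + t) ?_,
      isSingularPointOf_sq_mul_sub_sq (hLS p hpS) hVp,
      isSingularPointOf_sq_mul_sub_sq (hLS _ hq'S) (hV.eval_sub_div_smul_eq_zero hVp hB)⟩
    rw [add_smul, ← h, sub_add_cancel]

/-- If `F = L²W - V²` with `L` a linear form and `V, W` quadratic forms, and the
quartic curve `F = 0` is irreducible, then the curve has at least two singular points or a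
cusp (a singular point whose tangent cone is degenerate, i.e. the Hessian at the point has
rank at most one); in particular an irreducible quartic with at most one ordinary node cannot
be written in the form `L²W - V²`. -/
theorem square_factor_forces_bad_singularities
    (L V W F : MvPolynomial (Fin 3) ℂ)
    (hL : L.IsHomogeneous 1) (hV : V.IsHomogeneous 2) (hW : W.IsHomogeneous 2)
    (hF : F = L ^ 2 * W - V ^ 2) (hFirr : Irreducible F) :
    (∃ p q : Fin 3 → ℂ, p ≠ 0 ∧ q ≠ 0 ∧ (∀ c : ℂ, q ≠ c • p) ∧
        IsSingularPointOf F p ∧ IsSingularPointOf F q) ∨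
    (∃ p : Fin 3 → ℂ, p ≠ 0 ∧ IsSingularPointOf F p ∧ (hessianAt F p).rank ≤ 1) :=
  square_factor_forces_bad_singularities_general L V W F hL hV hF hFirr
end

section
/- Let F = abcd - V² with a,b,c,d linear forms and V a quadratic form in ℂ[x,y,z], defining a smooth quartic. If ef = λ²ab + 2λV + cd and eg = μ²ac + 2μV' + bd (with V' = λV appropriately, λμ ≠ 0) for linear forms e,f,g, then e divides (λb - μc) or e divides (λμa - d); hence the line e = 0 passes through the intersection point of b = 0 and c = 0, or of a = 0 and d = 0. -/
/-!
Eliminating `V` from the two relations gives `e (μf - λg) = (λb - μc)(λμa - d)`. A nonzero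
linear form is irreducible, hence prime in the factorial ring `ℂ[x, y, z]`, so `e` divides one
of the two factors. Two linear forms in three variables have a common nonzero zero; at a common
zero of `e` and `b` (resp. `e` and `a`) the divisibility forces `c` (resp. `d`) to vanish too.
-/

namespace MvPolynomial

variable {σ K : Type*} [Field K]

theorem IsHomogeneous.exists_eq_sum_smul_X {R : Type*} [CommSemiring R] [Fintype σ]
    {q : MvPolynomial σ R} (hq : q.IsHomogeneous 1) : ∃ c : σ → R, q = ∑ i, c i • X i := by
  have hq' : q ∈ Submodule.span R (Set.range (X : σ → MvPolynomial σ R)) := by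
    rwa [← homogeneousSubmodule_one_eq_span_X, mem_homogeneousSubmodule]
  obtain ⟨c, hc⟩ := (Submodule.mem_span_range_iff_exists_fun R).mp hq'
  exact ⟨c, hc.symm⟩

theorem IsHomogeneous.irreducible_of_degree_one {q : MvPolynomial σ K}
    (hq : q.IsHomogeneous 1) (h0 : q ≠ 0) : Irreducible q := by
  obtain ⟨m, hm⟩ := ne_zero_iff.mp h0
  refine irreducible_of_totalDegree_eq_one (hq.totalDegree h0) fun x hx => ?_
  exact isUnit_iff_ne_zero.mpr (by rintro rfl; exact hm (zero_dvd_iff.mp (hx m)))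

theorem exists_ne_zero_forall_eval_eq_zero_of_card_lt {ι : Type*} [Fintype ι] [Fintype σ]
    (q : ι → MvPolynomial σ K) (hq : ∀ i, (q i).IsHomogeneous 1)
    (hcard : Fintype.card ι < Fintype.card σ) :
    ∃ p : σ → K, p ≠ 0 ∧ ∀ i, eval p (q i) = 0 := by
  choose c hc using fun i => (hq i).exists_eq_sum_smul_X
  have hker : LinearMap.ker (Matrix.of c).mulVecLin ≠ ⊥ :=
    LinearMap.ker_ne_bot_of_finrank_lt (by simpa using hcard)
  obtain ⟨p, hp, hp0⟩ := Submodule.exists_mem_ne_zero_of_ne_bot hker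
  refine ⟨p, hp0, fun i => ?_⟩
  have := congrFun (LinearMap.mem_ker.mp hp) i
  rw [hc i]
  simpa [Matrix.mulVec, dotProduct] using this

theorem exists_ne_zero_eval_eq_zero_of_isHomogeneous_one [Fintype σ]
    {q r : MvPolynomial σ K} (hq : q.IsHomogeneous 1) (hr : r.IsHomogeneous 1)
    (hσ : 2 < Fintype.card σ) : ∃ p : σ → K, p ≠ 0 ∧ eval p q = 0 ∧ eval p r = 0 := by
  obtain ⟨p, hp0, hp⟩ := exists_ne_zero_forall_eval_eq_zero_of_card_lt ![q, r]
    (Fin.forall_fin_two.mpr ⟨hq, hr⟩) (by simpa using hσ)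
  exact ⟨p, hp0, hp 0, hp 1⟩

end MvPolynomial

open MvPolynomial

theorem dvd_mul_of_mul_eq_add_of_mul_eq_add {R : Type*} [CommRing R] {a b c d e f g V l m : R}
    (h1 : e * f = l ^ 2 * a * b + 2 * l * V + c * d)
    (h2 : e * g = m ^ 2 * a * c + 2 * m * V + b * d) :
    e ∣ (l * b - m * c) * (l * m * a - d) :=
  ⟨m * f - l * g, by linear_combination l * h2 - m * h1⟩

theorem bitangent_not_in_second_family_general
    (a b c d e f g V : MvPolynomial (Fin 3) ℂ)
    (ha : a.IsHomogeneous 1) (hb : b.IsHomogeneous 1)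
    (he : e.IsHomogeneous 1) (he0 : e ≠ 0)
    (lam mu : ℂ) (hmu : mu ≠ 0)
    (h1 : e * f = (C lam) ^ 2 * a * b + 2 * C lam * V + c * d)
    (h2 : e * g = (C mu) ^ 2 * a * c + 2 * C mu * V + b * d) :
    (e ∣ (C lam * b - C mu * c) ∨ e ∣ (C (lam * mu) * a - d)) ∧
    ((∃ p : Fin 3 → ℂ, p ≠ 0 ∧ eval p e = 0 ∧ eval p b = 0 ∧ eval p c = 0) ∨
     (∃ p : Fin 3 → ℂ, p ≠ 0 ∧ eval p e = 0 ∧ eval p a = 0 ∧ eval p d = 0)) := by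
  have hdvd : e ∣ (C lam * b - C mu * c) * (C (lam * mu) * a - d) := by
    rw [C_mul]
    exact dvd_mul_of_mul_eq_add_of_mul_eq_add h1 h2
  have eval_eq_zero {p : Fin 3 → ℂ} {r} (hr : e ∣ r) (hp : eval p e = 0) : eval p r = 0 :=
    zero_dvd_iff.mp (hp ▸ map_dvd (eval p) hr)
  rcases (he.irreducible_of_degree_one he0).prime.dvd_or_dvd hdvd with h | h
  · obtain ⟨p, hp0, hpe, hpb⟩ := exists_ne_zero_eval_eq_zero_of_isHomogeneous_one he hb (by simp)
    have hpc := eval_eq_zero h hpe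
    simp only [map_sub, map_mul, eval_C, hpb, mul_zero, zero_sub, neg_eq_zero,
      mul_eq_zero, hmu, false_or] at hpc
    exact ⟨Or.inl h, Or.inl ⟨p, hp0, hpe, hpb, hpc⟩⟩
  · obtain ⟨p, hp0, hpe, hpa⟩ := exists_ne_zero_eval_eq_zero_of_isHomogeneous_one he ha (by simp)
    have hpd := eval_eq_zero h hpe
    simp only [map_sub, map_mul, eval_C, hpa, mul_zero, zero_sub, neg_eq_zero] at hpd
    exact ⟨Or.inr h, Or.inr ⟨p, hp0, hpe, hpa, hpd⟩⟩

/-- Let `F = abcd - V²` define a smooth quartic, with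
`ef = λ²ab + 2λV + cd` and `eg = μ²ac + 2μV + bd` (`λμ ≠ 0`). Then `e` divides
`λb - μc` or `λμa - d`; hence the line `e = 0` passes through the intersection point of
`b = 0` and `c = 0`, or through that of `a = 0` and `d = 0`. -/
theorem bitangent_not_in_second_family
    (a b c d e f g V : MvPolynomial (Fin 3) ℂ)
    (ha : a.IsHomogeneous 1) (hb : b.IsHomogeneous 1) (hc : c.IsHomogeneous 1)
    (hd : d.IsHomogeneous 1) (he : e.IsHomogeneous 1) (hf : f.IsHomogeneous 1)
    (hg : g.IsHomogeneous 1) (hV : V.IsHomogeneous 2) (he0 : e ≠ 0)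
    (lam mu : ℂ) (hlam : lam ≠ 0) (hmu : mu ≠ 0)
    (h1 : e * f = (C lam) ^ 2 * a * b + 2 * C lam * V + c * d)
    (h2 : e * g = (C mu) ^ 2 * a * c + 2 * C mu * V + b * d) :
    (e ∣ (C lam * b - C mu * c) ∨ e ∣ (C (lam * mu) * a - d)) ∧
    ((∃ p : Fin 3 → ℂ, p ≠ 0 ∧ eval p e = 0 ∧ eval p b = 0 ∧ eval p c = 0) ∨
     (∃ p : Fin 3 → ℂ, p ≠ 0 ∧ eval p e = 0 ∧ eval p a = 0 ∧ eval p d = 0)) :=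
  bitangent_not_in_second_family_general a b c d e f g V ha hb he he0 lam mu hmu h1 h2
end

section
/- Let g₁, g₂, g₃ be binary forms of degrees 4, 4, 4 obtained by restricting homogeneous forms of degrees 1,2,3 (times appropriate factors) to a line L' in ℙ³: if g₁|_{L'}·g₃|_{L'} - g₂|_{L'}² = -q² for some binary quadratic form q, and g₁|_{L'} ≢ 0, then there is a binary linear form l₄ with l₄·g₁|_{L'} = -(g₂|_{L'} + q) (after possibly replacing q by -q), and it satisfies l₄²·g₁|_{L'} + 2l₄·g₂|_{L'} + g₃|_{L'} = 0. -/
/-!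
Over `ℂ` a nonzero linear binary form `A₁` is prime, and `A₁ ∣ A₂² - q² = (A₂ + q)(A₂ - q)`,
so `A₁` divides one of the factors; the cofactor, negated, is `l₄`, and it is again a form
because dividing a form by a nonzero form leaves a form. Multiplying
`l₄²A₁ + 2l₄A₂ + A₃` by `A₁` gives `(A₂ ± q)² - 2(A₂ ± q)A₂ + A₁A₃ = q² + A₁A₃ - A₂² = 0`.
-/

open MvPolynomial

namespace MvPolynomial

variable {σ R : Type*}

attribute [local instance] MvPolynomial.gradedAlgebra

theorem homogeneousComponent_mul_of_isHomogeneous_left [CommSemiring R]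
    {p : MvPolynomial σ R} {m : ℕ} (hp : p.IsHomogeneous m) (c : MvPolynomial σ R) (i : ℕ) :
    homogeneousComponent (m + i) (p * c) = p * homogeneousComponent i c := by
  rw [← decomposition.decompose'_apply, ← decomposition.decompose'_apply]
  exact DirectSum.coe_decompose_mul_add_of_left_mem (homogeneousSubmodule σ R)
    ((mem_homogeneousSubmodule m p).2 hp)

theorem IsHomogeneous.of_mul_left [CommRing R] [IsDomain R] {p c : MvPolynomial σ R} {m k : ℕ}
    (hp : p.IsHomogeneous m) (hp0 : p ≠ 0) (h : (p * c).IsHomogeneous (m + k)) :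
    c.IsHomogeneous k := by
  intro d hd
  change (Finsupp.weight fun _ ↦ 1) d = k
  rw [← Finsupp.degree_eq_weight_one]
  by_contra hdk
  have hcomp : p * homogeneousComponent d.degree c = 0 := by
    rw [← homogeneousComponent_mul_of_isHomogeneous_left hp,
      homogeneousComponent_of_mem ((mem_homogeneousSubmodule _ _).2 h), if_neg (by omega)]
  apply hd
  simpa [coeff_homogeneousComponent] using
    congr_arg (coeff d) ((mul_eq_zero.mp hcomp).resolve_left hp0)

theorem prime_of_totalDegree_eq_one [Field R] {p : MvPolynomial σ R} (hp : p.totalDegree = 1) :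
    Prime p := by
  refine (irreducible_of_totalDegree_eq_one hp fun x hx => ?_).prime
  refine isUnit_iff_ne_zero.2 fun hx0 => ?_
  have hp0 : p = 0 := by ext i; simpa [hx0] using hx i
  simp [hp0] at hp

theorem IsHomogeneous.prime_of_degree_one [Field R] {p : MvPolynomial σ R}
    (hp : p.IsHomogeneous 1) (hp0 : p ≠ 0) : Prime p :=
  prime_of_totalDegree_eq_one (hp.totalDegree hp0)

end MvPolynomial

theorem quadratic_eq_zero_of_mul_eq_neg_add {R : Type*} [CommRing R] [IsDomain R]
    {a b c s l : R} (ha : a ≠ 0) (h : a * c - b ^ 2 = -s ^ 2) (hl : l * a = -(b + s)) :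
    l ^ 2 * a + 2 * l * b + c = 0 :=
  mul_left_cancel₀ ha (by linear_combination (l * a + b - s) * hl + h)

theorem exists_isHomogeneous_root_of_dvd {σ R : Type*} [CommRing R] [IsDomain R]
    {a b c s : MvPolynomial σ R} {m n : ℕ} (ha : a.IsHomogeneous m) (ha0 : a ≠ 0)
    (hb : b.IsHomogeneous (m + n)) (hs : s.IsHomogeneous (m + n))
    (h : a * c - b ^ 2 = -s ^ 2) (hdvd : a ∣ b + s) :
    ∃ l : MvPolynomial σ R, l.IsHomogeneous n ∧ l * a = -(b + s) ∧
      l ^ 2 * a + 2 * l * b + c = 0 := by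
  obtain ⟨l, hl⟩ := hdvd
  have hla : -l * a = -(b + s) := by rw [hl]; ring
  exact ⟨-l, (ha.of_mul_left ha0 (hl ▸ hb.add hs)).neg, hla,
    quadratic_eq_zero_of_mul_eq_neg_add ha0 h hla⟩

theorem double_tangent_lifts_to_line_in_cubic_general
    (A₁ A₂ A₃ q : MvPolynomial (Fin 2) ℂ)
    (h1 : A₁.IsHomogeneous 1) (h2 : A₂.IsHomogeneous 2)
    (hq : q.IsHomogeneous 2)
    (hsq : A₁ * A₃ - A₂ ^ 2 = -q ^ 2)
    (hA₁ : A₁ ≠ 0) :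
    ∃ l₄ : MvPolynomial (Fin 2) ℂ, l₄.IsHomogeneous 1 ∧
      (l₄ * A₁ = -(A₂ + q) ∨ l₄ * A₁ = -(A₂ - q)) ∧
      l₄ ^ 2 * A₁ + 2 * l₄ * A₂ + A₃ = 0 := by
  have hdvd : A₁ ∣ (A₂ + q) * (A₂ + -q) := ⟨A₃, by linear_combination -hsq⟩
  rcases (h1.prime_of_degree_one hA₁).dvd_or_dvd hdvd with hplus | hminus
  · obtain ⟨l, hl, hlA, hroot⟩ := exists_isHomogeneous_root_of_dvd (n := 1) h1 hA₁ h2 hq hsq hplus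
    exact ⟨l, hl, Or.inl hlA, hroot⟩
  · obtain ⟨l, hl, hlA, hroot⟩ := exists_isHomogeneous_root_of_dvd (n := 1) h1 hA₁ h2 hq.neg
      (c := A₃) (by linear_combination hsq) hminus
    exact ⟨l, hl, Or.inr (by rw [hlA, sub_eq_add_neg]), hroot⟩

/-- If the binary forms `g₁|_{L'}, g₂|_{L'}, g₃|_{L'}` of degrees 1, 2, 3
(restrictions of forms of degrees 1, 2, 3 to a line `L'` in `ℙ³`) satisfy
`g₁|g₃| - g₂|² = -q²` for a binary quadratic form `q`, and `g₁|_{L'} ≢ 0`, then there is a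
binary linear form `l₄` with `l₄·g₁| = -(g₂| + q)` (after possibly replacing `q` by `-q`),
and it satisfies `l₄²·g₁| + 2l₄·g₂| + g₃| = 0`. -/
theorem double_tangent_lifts_to_line_in_cubic
    (A₁ A₂ A₃ q : MvPolynomial (Fin 2) ℂ)
    (h1 : A₁.IsHomogeneous 1) (h2 : A₂.IsHomogeneous 2) (h3 : A₃.IsHomogeneous 3)
    (hq : q.IsHomogeneous 2)
    (hsq : A₁ * A₃ - A₂ ^ 2 = -q ^ 2)
    (hA₁ : A₁ ≠ 0) :
    ∃ l₄ : MvPolynomial (Fin 2) ℂ, l₄.IsHomogeneous 1 ∧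
      (l₄ * A₁ = -(A₂ + q) ∨ l₄ * A₁ = -(A₂ - q)) ∧
      l₄ ^ 2 * A₁ + 2 * l₄ * A₂ + A₃ = 0 :=
  double_tangent_lifts_to_line_in_cubic_general A₁ A₂ A₃ q h1 h2 hq hsq hA₁
end

section
/- A binary quartic form ax⁴ + bx³y + cx²y² + dxy³ + ey⁴ over ℂ is a complete square (of a binary quadratic form) if and only if the coefficients satisfy the seven equations: 8a²d - 4abc + b³ = 0, cb² + 2abd - 4ac² + 16a²e = 0, b²d + 8abe - 4acd = 0, ad² - b²e = 0, bd² - 4bce + 8ade = 0, cd² - 4c²e + 2bde + 16ae² = 0, d³ - 4cde + 8be² = 0. -/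
/-!
If `a ≠ 0`, choose `ξ` with `ξ² = a`; the `x³y` and `x²y²` coefficients then force
`η = b / 2ξ` and `ζ = (c - η²) / 2ξ`, and the first two relations are exactly what makes the
`xy³` and `y⁴` coefficients match. Swapping `x` and `y` treats `e ≠ 0` the same way (using the
last two relations), and if `a = e = 0` the relations force `b = d = 0`, so the form is
`c x²y² = (√c xy)²`.
-/

section

variable {R : Type*} [CommRing R]

def IsSquareQuartic (a b c d e : R) : Prop :=
  ∃ ξ η ζ : R, a = ξ ^ 2 ∧ b = 2 * ξ * η ∧ c = 2 * ξ * ζ + η ^ 2 ∧ d = 2 * η * ζ ∧ e = ζ ^ 2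

variable {a b c d e : R}

theorem IsSquareQuartic.reverse (h : IsSquareQuartic a b c d e) : IsSquareQuartic e d c b a := by
  obtain ⟨ξ, η, ζ, rfl, rfl, rfl, rfl, rfl⟩ := h
  exact ⟨ζ, η, ξ, rfl, by ring, by ring, by ring, rfl⟩

theorem IsSquareQuartic.coeff_relations (h : IsSquareQuartic a b c d e) :
    8 * a ^ 2 * d - 4 * a * b * c + b ^ 3 = 0 ∧
    c * b ^ 2 + 2 * a * b * d - 4 * a * c ^ 2 + 16 * a ^ 2 * e = 0 ∧
    b ^ 2 * d + 8 * a * b * e - 4 * a * c * d = 0 ∧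
    a * d ^ 2 - b ^ 2 * e = 0 ∧
    b * d ^ 2 - 4 * b * c * e + 8 * a * d * e = 0 ∧
    c * d ^ 2 - 4 * c ^ 2 * e + 2 * b * d * e + 16 * a * e ^ 2 = 0 ∧
    d ^ 3 - 4 * c * d * e + 8 * b * e ^ 2 = 0 := by
  obtain ⟨ξ, η, ζ, rfl, rfl, rfl, rfl, rfl⟩ := h
  refine ⟨?_, ?_, ?_, ?_, ?_, ?_, ?_⟩ <;> ring

theorem isSquareQuartic_middle_sq (η : R) : IsSquareQuartic 0 0 (η ^ 2) 0 0 :=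
  ⟨0, η, 0, by ring, by ring, by ring, by ring, by ring⟩

end

theorem isSquareQuartic_of_sq_eq_leading {K : Type*} [Field K] [NeZero (2 : K)] {a b c d e ξ : K}
    (hξ : ξ ^ 2 = a) (ha : a ≠ 0)
    (h₁ : 8 * a ^ 2 * d - 4 * a * b * c + b ^ 3 = 0)
    (h₂ : c * b ^ 2 + 2 * a * b * d - 4 * a * c ^ 2 + 16 * a ^ 2 * e = 0) :
    IsSquareQuartic a b c d e := by
  subst hξ
  have hξ : ξ ≠ 0 := by rintro rfl; simp at ha
  refine ⟨ξ, b / (2 * ξ), (c - (b / (2 * ξ)) ^ 2) / (2 * ξ), rfl, ?_, ?_, ?_, ?_⟩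
  · field_simp
  · field_simp; ring
  · field_simp
    linear_combination h₁
  · field_simp
    linear_combination 4 * ξ ^ 2 * h₂ - b * h₁

/-- A binary quartic form `ax⁴ + bx³y + cx²y² + dxy³ + ey⁴` over `ℂ` is the
complete square of a binary quadratic form `ξx² + ηxy + ζy²` (i.e. `a = ξ²`, `b = 2ξη`,
`c = 2ξζ + η²`, `d = 2ηζ`, `e = ζ²`) if and only if its coefficients satisfy the seven listed
equations. -/
theorem binary_quartic_is_square_iff
    (a b c d e : ℂ) :
    (∃ ξ η ζ : ℂ, a = ξ ^ 2 ∧ b = 2 * ξ * η ∧ c = 2 * ξ * ζ + η ^ 2 ∧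
        d = 2 * η * ζ ∧ e = ζ ^ 2) ↔
    (8 * a ^ 2 * d - 4 * a * b * c + b ^ 3 = 0 ∧
     c * b ^ 2 + 2 * a * b * d - 4 * a * c ^ 2 + 16 * a ^ 2 * e = 0 ∧
     b ^ 2 * d + 8 * a * b * e - 4 * a * c * d = 0 ∧
     a * d ^ 2 - b ^ 2 * e = 0 ∧
     b * d ^ 2 - 4 * b * c * e + 8 * a * d * e = 0 ∧
     c * d ^ 2 - 4 * c ^ 2 * e + 2 * b * d * e + 16 * a * e ^ 2 = 0 ∧
     d ^ 3 - 4 * c * d * e + 8 * b * e ^ 2 = 0) := by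
  refine ⟨IsSquareQuartic.coeff_relations, ?_⟩
  rintro ⟨h₁, h₂, -, -, -, h₆, h₇⟩
  by_cases ha : a = 0
  · subst ha
    by_cases he : e = 0
    · subst he
      obtain rfl : b = 0 := pow_eq_zero_iff three_ne_zero |>.mp (by linear_combination h₁)
      obtain rfl : d = 0 := pow_eq_zero_iff three_ne_zero |>.mp (by linear_combination h₇)
      obtain ⟨η, rfl⟩ := IsAlgClosed.exists_pow_nat_eq c two_pos
      exact isSquareQuartic_middle_sq η
    · obtain ⟨ζ, hζ⟩ := IsAlgClosed.exists_pow_nat_eq e two_pos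
      exact (isSquareQuartic_of_sq_eq_leading hζ he (by linear_combination h₇)
        (by linear_combination h₆)).reverse
  · obtain ⟨ξ, hξ⟩ := IsAlgClosed.exists_pow_nat_eq a two_pos
    exact isSquareQuartic_of_sq_eq_leading hξ ha h₁ h₂
end
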